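/- arXiv:1708.00552 — 2 statements merged into one kernel-verified Lean document; each statement's English description precedes it below -/
import Mathlib

section
/- For every natural number n ≥ 39, every admissible multiplicity function m, and every minimal sum labeling ℓ of G(n,m): ℓ(v₁) = ℓ(v₂) for all vertices v₁, v₂ ∈ ψ(2). -/
/-!
Let `β` be the largest label on `ψ(2)` and suppose a vertex `a ∈ ψ(2)` carries `α < β`. Since
`2 + 2 ∈ S_n`, `α + β` is the label of some vertex `w`, and `w ∉ ψ(2)` by maximality of `β`.
The classes of `n - k` (`k ≤ 4`) and `n + 2` are singletons, and `(n + 2, 0)` carries the largest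
label. Every vertex of `ψ(2)` is adjacent to all vertices except `(n - 1, 0)` and `(n + 2, 0)`, so
`α` and `β` can be added to every other label but their own. Hence for each probe `(n - k, 0)`,
`k ∈ {0, 2, 3, 4}`, either `ℓ(n - k, 0) + β` is one of the two exceptional labels ("blocked") or
`ℓ(n - k, 0) + β + α = ℓ(n - k, 0) + ℓ w` is a label, i.e. the probe is adjacent to `w`. The probe
labels are distinct, so at most two probes are blocked, and the adjacencies then force `w.1 = 3`
(probes `0, 2` blocked) or `w.1 = 4` (probes `0, 3` blocked). In both cases the same argument with
`α` and `β` exchanged leaves too few values for the probe labels.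
-/

/-- `Sn n = {2,3,…,n} ∪ {n+2}`. -/
def Sn (n : ℕ) : Set ℕ := {k | (2 ≤ k ∧ k ≤ n) ∨ k = n + 2}

/-- `m` is an admissible multiplicity function for `Sn n`. -/
def Admissible (n : ℕ) (m : ℕ → ℕ) : Prop :=
  (∀ i ∈ Sn n, 2 * i ∈ Sn n → 2 ≤ m i) ∧
  (∀ i ∈ Sn n, 2 * i ∉ Sn n → m i = 1) ∧
  (∀ i, i ∉ Sn n → m i = 0)

/-- The vertex set of `G(n,m)`: pairs `(i,j)` with `i ∈ Sn n` and `j < m i`. -/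
def Vnm (n : ℕ) (m : ℕ → ℕ) : Set (ℕ × ℕ) := {p | p.1 ∈ Sn n ∧ p.2 < m p.1}

/-- Distinct vertices `u`, `v` of `G(n,m)` are adjacent iff `u.1 + v.1 ∈ Sn n`. -/
def AdjG (n : ℕ) (u v : ℕ × ℕ) : Prop := u ≠ v ∧ u.1 + v.1 ∈ Sn n

/-- `psi m i` is the set of vertices induced by the integer `i`. -/
def psi (m : ℕ → ℕ) (i : ℕ) : Set (ℕ × ℕ) := {p | p.1 = i ∧ p.2 < m i}

/-- The set of proper terminals of a vertex `v` of `G(n,m)`. -/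
def tau (n : ℕ) (m : ℕ → ℕ) (v : ℕ × ℕ) : Set (ℕ × ℕ) :=
  {w ∈ Vnm n m | w ≠ v ∧ v.1 + w.1 ∉ Sn n}

/-- A (possibly non-injective) sum labeling of the graph `G(n,m)`. -/
def IsSumLabelingG (n : ℕ) (m : ℕ → ℕ) (ℓ : ℕ × ℕ → ℕ) : Prop :=
  (∀ v ∈ Vnm n m, 1 ≤ ℓ v) ∧
  ∀ u ∈ Vnm n m, ∀ v ∈ Vnm n m, u ≠ v →
    (AdjG n u v ↔ ∃ w ∈ Vnm n m, ℓ u + ℓ v = ℓ w)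


variable {n : ℕ} {m : ℕ → ℕ} {ℓ : ℕ × ℕ → ℕ}

theorem mem_Sn {k : ℕ} : k ∈ Sn n ↔ (2 ≤ k ∧ k ≤ n) ∨ k = n + 2 := Iff.rfl

theorem Vnm_finite : (Vnm n m).Finite := by
  refine ((Set.finite_Iic (n + 2)).biUnion
    fun i _ => (Set.finite_singleton i).prod (Set.finite_Iio (m i))).subset ?_
  rintro ⟨i, j⟩ ⟨hi, hj⟩
  simp only [Set.mem_iUnion, Set.mem_prod, Set.mem_singleton_iff, Set.mem_Iio, Set.mem_Iic]
  exact ⟨i, by simp only [mem_Sn] at hi; omega, rfl, hj⟩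

theorem psi_subset_Vnm {i : ℕ} (hi : i ∈ Sn n) : psi m i ⊆ Vnm n m := by
  rintro ⟨_, j⟩ ⟨rfl, hj⟩
  exact ⟨hi, hj⟩

namespace Admissible

theorem mk_zero_mem (hm : Admissible n m) {i : ℕ} (hi : i ∈ Sn n) : (i, 0) ∈ Vnm n m := by
  refine ⟨hi, ?_⟩
  by_cases h2i : 2 * i ∈ Sn n
  · have := hm.1 i hi h2i; dsimp only; omega
  · have := hm.2.1 i hi h2i; dsimp only; omega

theorem eq_mk_zero (hm : Admissible n m) {i : ℕ} (hi : i ∈ Sn n) (h2i : 2 * i ∉ Sn n)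
    {p : ℕ × ℕ} (hp : p ∈ Vnm n m) (hpi : p.1 = i) : p = (i, 0) := by
  obtain ⟨_, j⟩ := p
  obtain rfl : _ = i := hpi
  have := hm.2.1 _ hi h2i
  have := hp.2
  simp only [Prod.mk.injEq, true_and]
  omega

theorem exists_adj (hn : 5 ≤ n) (hm : Admissible n m) {u : ℕ × ℕ} (hu : u ∈ Vnm n m)
    (hne : u ≠ (n + 2, 0)) : ∃ v ∈ Vnm n m, v ≠ u ∧ u.1 + v.1 ∈ Sn n := by
  have hu1 : 2 ≤ u.1 ∧ u.1 ≤ n := by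
    rcases hu.1 with h | h
    · exact h
    · exact absurd (hm.eq_mk_zero (i := n + 2) (by simp [mem_Sn]) (by simp [mem_Sn]; omega) hu h)
        hne
  have h2 : (2 : ℕ) ∈ Sn n := by simp [mem_Sn]; omega
  by_cases hn1 : u.1 = n - 1
  · refine ⟨(3, 0), hm.mk_zero_mem (by simp [mem_Sn]; omega), ?_, by simp [mem_Sn]; omega⟩
    rintro rfl; simp at hn1; omega
  by_cases hu2 : u = (2, 0)
  · have := hm.1 2 h2 (by simp [mem_Sn]; omega)
    exact ⟨(2, 1), ⟨h2, this⟩, by simp [hu2], by simp [mem_Sn, hu2]; omega⟩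
  · exact ⟨(2, 0), hm.mk_zero_mem h2, Ne.symm hu2, by simp [mem_Sn]; omega⟩

end Admissible

namespace IsSumLabelingG

theorem add_mem_image_iff (hℓ : IsSumLabelingG n m ℓ) {u v : ℕ × ℕ} (hu : u ∈ Vnm n m)
    (hv : v ∈ Vnm n m) (huv : u ≠ v) : ℓ u + ℓ v ∈ ℓ '' Vnm n m ↔ u.1 + v.1 ∈ Sn n := by
  rw [show u.1 + v.1 ∈ Sn n ↔ AdjG n u v from (and_iff_right huv).symm, hℓ.2 u hu v hv huv]
  exact ⟨fun ⟨w, hw, h⟩ => ⟨w, hw, h.symm⟩, fun ⟨w, hw, h⟩ => ⟨w, hw, h.symm⟩⟩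

theorem fst_add_mem_of_label_eq (hℓ : IsSumLabelingG n m ℓ) {u u' v : ℕ × ℕ}
    (hu : u ∈ Vnm n m) (hu' : u' ∈ Vnm n m) (hv : v ∈ Vnm n m) (huv : u ≠ v) (hu'v : u' ≠ v)
    (heq : ℓ u = ℓ u') (h : u.1 + v.1 ∈ Sn n) : u'.1 + v.1 ∈ Sn n := by
  rw [← hℓ.add_mem_image_iff hu' hv hu'v, ← heq]
  exact (hℓ.add_mem_image_iff hu hv huv).2 h

/-- `(n + 2, 0)` is the only vertex without a neighbour, and a vertex of maximal label has none. -/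
theorem label_le_top (hn : 5 ≤ n) (hm : Admissible n m) (hℓ : IsSumLabelingG n m ℓ)
    {u : ℕ × ℕ} (hu : u ∈ Vnm n m) : ℓ u ≤ ℓ (n + 2, 0) := by
  obtain ⟨u₀, hu₀, hmax⟩ := Set.exists_max_image _ ℓ Vnm_finite ⟨u, hu⟩
  obtain rfl | hne := eq_or_ne u₀ (n + 2, 0)
  · exact hmax u hu
  obtain ⟨v, hv, hvu, hadj⟩ := hm.exists_adj hn hu₀ hne
  obtain ⟨w, hw, hwl⟩ := (hℓ.add_mem_image_iff hu₀ hv hvu.symm).2 hadj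
  have := hmax w hw
  have := hℓ.1 v hv
  omega

/-- The vertex `(k + 2, 0)` tells `(n - j, 0)` and `(n - k, 0)` apart. -/
theorem label_ne (hn : 11 ≤ n) (hm : Admissible n m) (hℓ : IsSumLabelingG n m ℓ) {j k : ℕ}
    (hjk : j < k) (hk : k ≤ 4) : ℓ (n - j, 0) ≠ ℓ (n - k, 0) := by
  intro heq
  have hSn : ∀ i, 2 ≤ i → i ≤ n → i ∈ Sn n := fun i h1 h2 => Or.inl ⟨h1, h2⟩
  have h := hℓ.fst_add_mem_of_label_eq (u := (n - k, 0)) (u' := (n - j, 0)) (v := (k + 2, 0))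
    (hm.mk_zero_mem (hSn _ (by omega) (by omega))) (hm.mk_zero_mem (hSn _ (by omega) (by omega)))
    (hm.mk_zero_mem (hSn _ (by omega) (by omega))) (by simp; omega) (by simp; omega) heq.symm
    (by simp [mem_Sn]; omega)
  simp only [mem_Sn] at h
  omega

theorem add_mem_image_of_fst_eq_two (hn : 11 ≤ n) (hm : Admissible n m)
    (hℓ : IsSumLabelingG n m ℓ) {c : ℕ × ℕ} (hc : c ∈ Vnm n m) (hc2 : c.1 = 2) {x : ℕ}
    (hx : x ∈ ℓ '' Vnm n m) (hx₁ : x ≠ ℓ (n - 1, 0)) (hx₂ : x ≠ ℓ (n + 2, 0))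
    (hxc : x ≠ ℓ c) : x + ℓ c ∈ ℓ '' Vnm n m := by
  obtain ⟨u, hu, rfl⟩ := hx
  have hu₁ : u.1 ≠ n - 1 := fun h => hx₁ <| by
    rw [hm.eq_mk_zero (by simp [mem_Sn]; omega) (by simp [mem_Sn]; omega) hu h]
  have hu₂ : u.1 ≠ n + 2 := fun h => hx₂ <| by
    rw [hm.eq_mk_zero (i := n + 2) (by simp [mem_Sn]) (by simp [mem_Sn]; omega) hu h]
  refine (hℓ.add_mem_image_iff hu hc (fun h => hxc (h ▸ rfl))).2 ?_
  have := hu.1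
  simp only [mem_Sn] at this ⊢
  omega

/-- `ℓ a` can be added to every label except those of `(n - 1, 0)`, `(n + 2, 0)` and `a`, so
otherwise `ℓ t + ℓ b + ℓ a = ℓ t + ℓ u` would be a label. -/
theorem label_add_eq_of_not_adj (hn : 11 ≤ n) (hm : Admissible n m)
    (hℓ : IsSumLabelingG n m ℓ) {a b t u : ℕ × ℕ} (ha : a ∈ psi m 2) (hb : b ∈ psi m 2)
    (ht : t ∈ Vnm n m) (ht2 : t.1 ≠ 2) (ht_add : t.1 + 2 ∈ Sn n)
    (hu : u ∈ Vnm n m) (hut : t ≠ u) (hul : ℓ u = ℓ a + ℓ b) (hnot : t.1 + u.1 ∉ Sn n) :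
    ℓ t + ℓ b = ℓ (n - 1, 0) ∨ ℓ t + ℓ b = ℓ (n + 2, 0) ∨ ℓ t + ℓ b = ℓ a := by
  have h2 : (2 : ℕ) ∈ Sn n := Or.inl ⟨le_rfl, by omega⟩
  by_contra! hx
  have htb := (hℓ.add_mem_image_iff ht (psi_subset_Vnm h2 hb) fun h => ht2 (h ▸ hb.1)).2
    (hb.1 ▸ ht_add)
  have := hℓ.add_mem_image_of_fst_eq_two hn hm (psi_subset_Vnm h2 ha) ha.1 htb hx.1 hx.2.1 hx.2.2
  rw [← hℓ.add_mem_image_iff ht hu hut, hul] at hnot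
  exact hnot (by rwa [← add_assoc, add_right_comm])

end IsSumLabelingG

/-- `(n - 1, 0)` and `(n + 2, 0)` are the only vertices adjacent to no vertex of `ψ(2)`. -/
def ProbeBlocked (n : ℕ) (ℓ : ℕ × ℕ → ℕ) (b : ℕ × ℕ) (k : ℕ) : Prop :=
  ℓ (n - k, 0) + ℓ b = ℓ (n - 1, 0) ∨ ℓ (n - k, 0) + ℓ b = ℓ (n + 2, 0)

namespace IsSumLabelingG

theorem not_probeBlocked_of_lt (hn : 11 ≤ n) (hm : Admissible n m) (hℓ : IsSumLabelingG n m ℓ)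
    {b : ℕ × ℕ} {i j k : ℕ} (hij : i < j) (hjk : j < k) (hk : k ≤ 4)
    (hi : ProbeBlocked n ℓ b i) (hj : ProbeBlocked n ℓ b j) : ¬ProbeBlocked n ℓ b k := by
  have := hℓ.label_ne hn hm hij (by omega)
  have := hℓ.label_ne hn hm (hij.trans hjk) hk
  have := hℓ.label_ne hn hm hjk hk
  unfold ProbeBlocked at *
  omega

theorem probe_exceptional_or_adj (hn : 11 ≤ n) (hm : Admissible n m)
    (hℓ : IsSumLabelingG n m ℓ) {a b u : ℕ × ℕ} (ha : a ∈ psi m 2) (hb : b ∈ psi m 2)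
    (hu : u ∈ Vnm n m) (hul : ℓ u = ℓ a + ℓ b) {k : ℕ} (hk : k ≤ 4) (hk1 : k ≠ 1) :
    (ProbeBlocked n ℓ b k ∨ ℓ (n - k, 0) + ℓ b = ℓ a) ∨ u.1 = n - k ∨ n - k + u.1 ∈ Sn n := by
  by_cases hadj : n - k + u.1 ∈ Sn n
  · exact Or.inr (Or.inr hadj)
  by_cases hut : (n - k, 0) = u
  · exact Or.inr (Or.inl (by rw [← hut]))
  refine Or.inl ?_
  rw [ProbeBlocked, or_assoc]
  exact hℓ.label_add_eq_of_not_adj hn hm ha hb (hm.mk_zero_mem (by simp [mem_Sn]; omega))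
    (by simp; omega) (by simp [mem_Sn]; omega) hu hut hul hadj

/-- A vertex `w` labelled `ℓ a + ℓ b` with `ℓ a < ℓ b` is adjacent to every unblocked probe; at most
two of the probes `k = 0, 2, 3, 4` are blocked, which pins down `w.1`. -/
theorem probeBlocked_and_fst_eq (hn : 11 ≤ n) (hm : Admissible n m)
    (hℓ : IsSumLabelingG n m ℓ) {a b w : ℕ × ℕ} (ha : a ∈ psi m 2) (hb : b ∈ psi m 2)
    (hlt : ℓ a < ℓ b) (hw : w ∈ Vnm n m) (hwl : ℓ w = ℓ a + ℓ b) (hw2 : w.1 ≠ 2) :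
    ProbeBlocked n ℓ b 0 ∧
      (ProbeBlocked n ℓ b 2 ∧ w.1 = 3 ∨ ProbeBlocked n ℓ b 3 ∧ w.1 = 4) := by
  have hwS := hw.1
  rw [mem_Sn] at hwS
  have hpos : ∀ k ≤ 4, k ≠ 1 → ¬ProbeBlocked n ℓ b k → w.1 = n - k ∨ n - k + w.1 ∈ Sn n := by
    intro k hk hk1 hblk
    rcases hℓ.probe_exceptional_or_adj hn hm ha hb hw hwl hk hk1 with (h | h) | h
    exacts [absurd h hblk, by omega, h]
  have hB0 : ProbeBlocked n ℓ b 0 := by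
    by_contra hB0
    have hwn := hpos 0 (by omega) (by omega) hB0
    rw [mem_Sn] at hwn
    refine hℓ.not_probeBlocked_of_lt hn hm (b := b) (i := 2) (j := 3) (k := 4) (by omega)
      (by omega) le_rfl ?_ ?_ ?_ <;> by_contra hB <;>
      have := hpos _ (by omega) (by omega) hB <;> rw [mem_Sn] at this <;> omega
  refine ⟨hB0, ?_⟩
  by_cases hB2 : ProbeBlocked n ℓ b 2
  · have h₃ := hpos 3 (by omega) (by omega)
      (hℓ.not_probeBlocked_of_lt hn hm (by omega) (by omega) (by omega) hB0 hB2)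
    have h₄ := hpos 4 (by omega) (by omega)
      (hℓ.not_probeBlocked_of_lt hn hm (by omega) (by omega) (by omega) hB0 hB2)
    rw [mem_Sn] at h₃ h₄
    exact Or.inl ⟨hB2, by omega⟩
  · have h₂ := hpos 2 (by omega) (by omega) hB2
    by_cases hB3 : ProbeBlocked n ℓ b 3
    · have h₄ := hpos 4 (by omega) (by omega)
        (hℓ.not_probeBlocked_of_lt hn hm (by omega) (by omega) le_rfl hB0 hB3)
      rw [mem_Sn] at h₂ h₄
      exact Or.inr ⟨hB3, by omega⟩
    · have h₃ := hpos 3 (by omega) (by omega) hB3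
      rw [mem_Sn] at h₂ h₃
      omega

theorem fst_ne_three (hn : 11 ≤ n) (hm : Admissible n m) (hℓ : IsSumLabelingG n m ℓ)
    {a b w : ℕ × ℕ} (ha : a ∈ psi m 2) (hb : b ∈ psi m 2) (hlt : ℓ a < ℓ b)
    (hw : w ∈ Vnm n m) (hwl : ℓ w = ℓ a + ℓ b)
    (hB0 : ProbeBlocked n ℓ b 0) (hB2 : ProbeBlocked n ℓ b 2) : w.1 ≠ 3 := by
  intro hw3
  have h2 : (2 : ℕ) ∈ Sn n := Or.inl ⟨le_rfl, by omega⟩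
  have := hℓ.1 a (psi_subset_Vnm h2 ha)
  have hr₀ := hℓ.probe_exceptional_or_adj hn hm hb ha hw (hwl.trans (add_comm _ _))
    (k := 0) (by omega) (by omega)
  have hr₂ := hℓ.probe_exceptional_or_adj hn hm hb ha hw (hwl.trans (add_comm _ _))
    (k := 2) (by omega) (by omega)
  obtain ⟨v, hv, hvl⟩ := (hℓ.add_mem_image_iff (hm.mk_zero_mem (i := n - 1)
    (by simp [mem_Sn]; omega)) hw (by rintro rfl; simp at hw3; omega)).2 (by simp [mem_Sn]; omega)
  have := hℓ.label_le_top (by omega) hm hv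
  have := hℓ.label_ne hn hm (j := 0) (k := 2) (by omega) (by omega)
  simp only [ProbeBlocked, mem_Sn] at *
  omega

theorem fst_ne_four (hn : 11 ≤ n) (hm : Admissible n m) (hℓ : IsSumLabelingG n m ℓ)
    {a b w : ℕ × ℕ} (ha : a ∈ psi m 2) (hb : b ∈ psi m 2) (hlt : ℓ a < ℓ b)
    (hw : w ∈ Vnm n m) (hwl : ℓ w = ℓ a + ℓ b)
    (hB0 : ProbeBlocked n ℓ b 0) (hB3 : ProbeBlocked n ℓ b 3) : w.1 ≠ 4 := by
  intro hw4
  have h2 : (2 : ℕ) ∈ Sn n := Or.inl ⟨le_rfl, by omega⟩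
  have hbV := psi_subset_Vnm h2 hb
  have := hℓ.1 a (psi_subset_Vnm h2 ha)
  have hr₀ := hℓ.probe_exceptional_or_adj hn hm hb ha hw (hwl.trans (add_comm _ _))
    (k := 0) (by omega) (by omega)
  have hr₃ := hℓ.probe_exceptional_or_adj hn hm hb ha hw (hwl.trans (add_comm _ _))
    (k := 3) (by omega) (by omega)
  obtain ⟨v, hv, hvl⟩ := (hℓ.add_mem_image_iff hw hbV (by rintro rfl; omega)).2
    (by rw [hw4, hb.1]; simp [mem_Sn]; omega)
  have hv_exc : ℓ v = ℓ (n - 1, 0) ∨ ℓ v = ℓ (n + 2, 0) ∨ ℓ v + ℓ b ≤ ℓ (n + 2, 0) := by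
    by_contra! h
    obtain ⟨v', hv', hv'l⟩ := hℓ.add_mem_image_of_fst_eq_two hn hm hbV hb.1 ⟨v, hv, rfl⟩
      h.1 h.2.1 (by omega)
    have := hℓ.label_le_top (by omega) hm hv'
    omega
  have := hℓ.label_ne hn hm (j := 0) (k := 3) (by omega) (by omega)
  have := hℓ.label_le_top (by omega) hm (hm.mk_zero_mem (i := n - 1) (by simp [mem_Sn]; omega))
  obtain ⟨k, hk, hkw⟩ : ∃ k, (k = 0 ∨ k = 3) ∧ ℓ (n - k, 0) = ℓ w := by
    simp only [ProbeBlocked, mem_Sn] at *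
    rcases (by omega : ℓ (n - 0, 0) = ℓ w ∨ ℓ (n - 3, 0) = ℓ w) with h | h
    exacts [⟨0, Or.inl rfl, h⟩, ⟨3, Or.inr rfl, h⟩]
  refine hℓ.not_probeBlocked_of_lt hn hm (j := 2) (k := 3) (by omega) (by omega) (by omega) hB0 ?_
    hB3
  have := hℓ.probe_exceptional_or_adj hn hm ha hb (hm.mk_zero_mem (by simp [mem_Sn]; omega))
    (hkw.trans hwl) (k := 2) (by omega) (by omega)
  simp only [ProbeBlocked, mem_Sn] at this ⊢
  omega

theorem label_eq_of_forall_le (hn : 11 ≤ n) (hm : Admissible n m) (hℓ : IsSumLabelingG n m ℓ)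
    {a b : ℕ × ℕ} (ha : a ∈ psi m 2) (hb : b ∈ psi m 2) (hmax : ∀ v ∈ psi m 2, ℓ v ≤ ℓ b) :
    ℓ a = ℓ b := by
  have h2 : (2 : ℕ) ∈ Sn n := Or.inl ⟨le_rfl, by omega⟩
  have haV := psi_subset_Vnm h2 ha
  by_contra hne
  have hlt : ℓ a < ℓ b := (hmax a ha).lt_of_ne hne
  obtain ⟨w, hw, hwl⟩ := (hℓ.add_mem_image_iff haV (psi_subset_Vnm h2 hb)
    fun h => hne (h ▸ rfl)).2 (by rw [ha.1, hb.1]; simp [mem_Sn]; omega)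
  have hw2 : w.1 ≠ 2 := fun h => by
    have := hmax w ⟨h, h ▸ hw.2⟩
    have := hℓ.1 a haV
    omega
  obtain ⟨hB0, ⟨hB2, hw3⟩ | ⟨hB3, hw4⟩⟩ :=
    hℓ.probeBlocked_and_fst_eq hn hm ha hb hlt hw hwl hw2
  exacts [hℓ.fst_ne_three hn hm ha hb hlt hw hwl hB0 hB2 hw3,
    hℓ.fst_ne_four hn hm ha hb hlt hw hwl hB0 hB3 hw4]

end IsSumLabelingG

theorem psi_two_label_unique_general (n : ℕ) (hn : 39 ≤ n) (m : ℕ → ℕ)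
    (hm : Admissible n m) (ℓ : ℕ × ℕ → ℕ) (hℓ : IsSumLabelingG n m ℓ)
    (v₁ v₂ : ℕ × ℕ) (hv₁ : v₁ ∈ psi m 2) (hv₂ : v₂ ∈ psi m 2) :
    ℓ v₁ = ℓ v₂ := by
  have hpsi : psi m 2 ⊆ Vnm n m := psi_subset_Vnm (Or.inl ⟨le_rfl, by omega⟩)
  obtain ⟨b, hb, hmax⟩ := Set.exists_max_image _ ℓ (Vnm_finite.subset hpsi) ⟨v₁, hv₁⟩
  rw [hℓ.label_eq_of_forall_le (by omega) hm hv₁ hb hmax,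
    hℓ.label_eq_of_forall_le (by omega) hm hv₂ hb hmax]

/-- For `n ≥ 39`, any admissible `m`, and any minimal sum labeling `ℓ` of
`G(n,m)`, all vertices of `ψ(2)` carry the same label. -/
theorem psi_two_label_unique (n : ℕ) (hn : 39 ≤ n) (m : ℕ → ℕ)
    (hm : Admissible n m) (ℓ : ℕ × ℕ → ℕ) (hℓ : IsSumLabelingG n m ℓ)
    (hmin : ∃ u ∈ Vnm n m, ℓ u = 1)
    (v₁ v₂ : ℕ × ℕ) (hv₁ : v₁ ∈ psi m 2) (hv₂ : v₂ ∈ psi m 2) :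
    ℓ v₁ = ℓ v₂ :=
  psi_two_label_unique_general n hn m hm ℓ hℓ v₁ v₂ hv₁ hv₂
end

section
/- For every natural number n ≥ 39, every admissible multiplicity function m, and every minimal sum labeling ℓ of G(n,m): ℓ(v₁) = ℓ(v₂) for all vertices v₁, v₂ ∈ ψ(3). -/
/-!
The isolated vertex `(n + 2, 0)` carries the largest label `M`. Let `v` carry the largest label
among the other vertices; then `ℓ v + ℓ u = M` for every neighbour `u` of `v`, and since vertices
with equal labels have the same neighbours, `v` is `(n - 1, 0)` or `(n, 0)`. In the first case all
of `ψ(3)` is adjacent to `v` and gets the label `M - ℓ v`.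

In the second case `(n, 0)` is adjacent only to `ψ(2)`, which is therefore labelled
`c = M - ℓ (n, 0)`. Adding `c` to a label gives a label except at `f = ℓ (n - 1, 0)` and at `M`, so
the labels form two unbroken progressions of step `c` ending at `f` and at `M`. Modulo `c` this
leaves no room for the labels `1`, `c`, `ℓ u` and `ℓ u + ℓ u'` of two vertices of `ψ(3)` unless
`c ≤ 2`. For `c = 1` and `c = 2`, two labels `ℓ u < ℓ u'` on `ψ(3)` are ruled out by locating the
carriers of the labels just below `M` and `f`, using that `(n - 2, 0)` is not adjacent to `ψ(3)`
while `(n - 1, 0)` is adjacent to `ψ(3)` only.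
-/

namespace Gnm

theorem exists_progression_of_step {L : ℕ → Prop} {a b c B : ℕ} (hc : 0 < c)
    (hB : ∀ t, L t → t ≤ B) (hstep : ∀ t, L t → t ≠ a → t ≠ b → L (t + c)) {t : ℕ}
    (ht : L t) : ∃ k, (t + k * c = a ∨ t + k * c = b) ∧ ∀ j ≤ k, L (t + j * c) := by
  induction hd : B - t using Nat.strong_induction_on generalizing t with
  | _ d ih =>
    by_cases hab : t = a ∨ t = b
    · exact ⟨0, by simpa using hab, fun j hj => by simpa [Nat.le_zero.1 hj] using ht⟩
    push Not at hab
    have hnext := hstep t ht hab.1 hab.2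
    have := hB _ hnext
    obtain ⟨k, hk, hall⟩ := ih (B - (t + c)) (by omega) hnext rfl
    refine ⟨k + 1, by convert hk using 2 <;> ring, fun j hj => ?_⟩
    rcases j with _ | j
    · simpa using ht
    · convert hall j (by omega) using 1
      ring

theorem two_eq_zero_of_residues {R : Type*} [CommRing R] {F M a b : R} (ha : F + a = M)
    (hb : F + b = M) (h1 : 1 = F ∨ 1 = M) (h0 : 0 = F ∨ 0 = M) (ha' : a = F ∨ a = M)
    (hab : a + b = F ∨ a + b = M) : (2 : R) = 0 := by
  rcases h0 with rfl | rfl <;> rcases h1 with h1 | h1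
  · linear_combination 2 * h1
  · rcases hab with h | h
    · linear_combination h - ha - hb + 2 * h1
    · linear_combination 2 * h - 2 * ha - 2 * hb + 2 * h1
  · rcases ha' with h | h
    · linear_combination ha - h + 2 * h1
    · linear_combination 2 * ha - 2 * h + 2 * h1
  · linear_combination 2 * h1

variable {n : ℕ} {m : ℕ → ℕ} {ℓ : ℕ × ℕ → ℕ} {u₁ u₂ : ℕ × ℕ}

-- In names, `x`, `f`, `e` and `M` stand for the labels of `(n, 0)`, `(n - 1, 0)`, `(n - 2, 0)`
-- and `(n + 2, 0)`, and `psi` for `ψ(3)`.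

theorem mem_Sn {k : ℕ} : k ∈ Sn n ↔ (2 ≤ k ∧ k ≤ n) ∨ k = n + 2 := Iff.rfl

theorem Vnm_finite : (Vnm n m).Finite := by
  refine ((Set.finite_Iic (n + 2)).prod (Set.finite_Iio ((Finset.range (n + 3)).sup m))).subset ?_
  rintro ⟨i, j⟩ ⟨hi, hj⟩
  rw [mem_Sn] at hi
  refine ⟨Set.mem_Iic.2 (by omega), Set.mem_Iio.2 (hj.trans_le (Finset.le_sup ?_))⟩
  rw [Finset.mem_range]
  omega

def IsLabel (n : ℕ) (m : ℕ → ℕ) (ℓ : ℕ × ℕ → ℕ) (t : ℕ) : Prop := ∃ w ∈ Vnm n m, t = ℓ w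

structure MinSumLabeling (n : ℕ) (m : ℕ → ℕ) (ℓ : ℕ × ℕ → ℕ) : Prop where
  sixteen_le : 16 ≤ n
  admissible : Admissible n m
  isSumLabeling : IsSumLabelingG n m ℓ
  exists_eq_one : ∃ u ∈ Vnm n m, ℓ u = 1

def IsSecondMax (n : ℕ) (m : ℕ → ℕ) (ℓ : ℕ × ℕ → ℕ) (v : ℕ × ℕ) : Prop :=
  v ∈ Vnm n m ∧ v.1 ≠ n + 2 ∧ ∀ u ∈ Vnm n m, u.1 ≠ n + 2 → ℓ u ≤ ℓ v

namespace MinSumLabeling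

theorem one_le (C : MinSumLabeling n m ℓ) {v : ℕ × ℕ} (hv : v ∈ Vnm n m) : 1 ≤ ℓ v :=
  C.isSumLabeling.1 v hv

theorem isLabel_one (C : MinSumLabeling n m ℓ) : IsLabel n m ℓ 1 :=
  let ⟨u, hu, h⟩ := C.exists_eq_one
  ⟨u, hu, h.symm⟩

theorem mk_zero_mem_of_mem (C : MinSumLabeling n m ℓ) {i : ℕ} (hi : i ∈ Sn n) :
    ((i, 0) : ℕ × ℕ) ∈ Vnm n m := by
  refine ⟨hi, ?_⟩
  by_cases h : 2 * i ∈ Sn n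
  · have := C.admissible.1 i hi h
    show 0 < m i
    omega
  · have := C.admissible.2.1 i hi h
    show 0 < m i
    omega

theorem mk_zero_mem (C : MinSumLabeling n m ℓ) {i : ℕ} (h2 : 2 ≤ i) (hi : i ≤ n) :
    ((i, 0) : ℕ × ℕ) ∈ Vnm n m :=
  C.mk_zero_mem_of_mem (Or.inl ⟨h2, hi⟩)

theorem isolated_mem (C : MinSumLabeling n m ℓ) : ((n + 2, 0) : ℕ × ℕ) ∈ Vnm n m :=
  C.mk_zero_mem_of_mem (Or.inr rfl)

theorem mem_Vnm_of_mem_psi (C : MinSumLabeling n m ℓ) {u : ℕ × ℕ} (hu : u ∈ psi m 3) :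
    u ∈ Vnm n m := by
  have := C.sixteen_le
  exact ⟨by rw [hu.1, mem_Sn]; omega, by rw [hu.1]; exact hu.2⟩

theorem three_zero_mem_psi (C : MinSumLabeling n m ℓ) : ((3, 0) : ℕ × ℕ) ∈ psi m 3 :=
  ⟨rfl, (C.mk_zero_mem (i := 3) (by omega) (by have := C.sixteen_le; omega)).2⟩

theorem three_one_mem_psi (C : MinSumLabeling n m ℓ) : ((3, 1) : ℕ × ℕ) ∈ psi m 3 := by
  have := C.sixteen_le
  exact ⟨rfl, C.admissible.1 3 (by rw [mem_Sn]; omega) (by rw [mem_Sn]; omega)⟩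

theorem exists_fst_eq_ne (C : MinSumLabeling n m ℓ) {i : ℕ} (h2 : 2 ≤ i) (hi : 2 * i ≤ n)
    (v : ℕ × ℕ) : ∃ p ∈ Vnm n m, p.1 = i ∧ p ≠ v := by
  have hiS : i ∈ Sn n := Or.inl ⟨h2, by omega⟩
  by_cases h : v = (i, 0)
  · exact ⟨(i, 1), ⟨hiS, C.admissible.1 i hiS (Or.inl ⟨by omega, hi⟩)⟩, rfl, by simp [h]⟩
  · exact ⟨(i, 0), C.mk_zero_mem_of_mem hiS, rfl, Ne.symm h⟩

theorem eq_mk_zero (C : MinSumLabeling n m ℓ) {w : ℕ × ℕ} (hw : w ∈ Vnm n m) {k : ℕ}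
    (hk : w.1 = k) (h : n - 2 ≤ k) : w = (k, 0) := by
  have h2k : 2 * w.1 ∉ Sn n := by
    rw [mem_Sn]
    have := C.sixteen_le
    omega
  have := C.admissible.2.1 w.1 hw.1 h2k
  have := hw.2
  exact Prod.ext hk (by simp only; omega)

theorem isLabel_add (C : MinSumLabeling n m ℓ) {u v : ℕ × ℕ} (hu : u ∈ Vnm n m)
    (hv : v ∈ Vnm n m) (hne : u ≠ v) (hs : u.1 + v.1 ∈ Sn n) : IsLabel n m ℓ (ℓ u + ℓ v) :=
  (C.isSumLabeling.2 u hu v hv hne).1 ⟨hne, hs⟩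

theorem not_isLabel_add (C : MinSumLabeling n m ℓ) {u v : ℕ × ℕ} (hu : u ∈ Vnm n m)
    (hv : v ∈ Vnm n m) (hne : u ≠ v) (hs : u.1 + v.1 ∉ Sn n) : ¬ IsLabel n m ℓ (ℓ u + ℓ v) :=
  fun h => hs ((C.isSumLabeling.2 u hu v hv hne).2 h).2

theorem mem_Sn_of_label_eq (C : MinSumLabeling n m ℓ) {w p q : ℕ × ℕ} (hw : w ∈ Vnm n m)
    (hp : p ∈ Vnm n m) (hq : q ∈ Vnm n m) (hwp : w ≠ p) (hwq : w ≠ q) (hpq : ℓ p = ℓ q)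
    (hs : w.1 + p.1 ∈ Sn n) : w.1 + q.1 ∈ Sn n := by
  by_contra h
  exact C.not_isLabel_add hw hq hwq h (hpq ▸ C.isLabel_add hw hp hwp hs)

theorem exists_adj (C : MinSumLabeling n m ℓ) {w : ℕ × ℕ} (hw : w ∈ Vnm n m)
    (hz : w.1 ≠ n + 2) : ∃ p ∈ Vnm n m, p ≠ w ∧ w.1 + p.1 ∈ Sn n := by
  have hn := C.sixteen_le
  have hw1 := hw.1
  rw [mem_Sn] at hw1
  by_cases hle : w.1 + 2 ≤ n
  · obtain ⟨p, hp, hp2, hpw⟩ := C.exists_fst_eq_ne le_rfl (by omega) w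
    exact ⟨p, hp, hpw, by rw [mem_Sn]; omega⟩
  · refine ⟨(n + 2 - w.1, 0), C.mk_zero_mem (by omega) (by omega),
      ne_of_apply_ne Prod.fst (by simp only; omega), by rw [mem_Sn]; omega⟩

theorem label_lt_isolated (C : MinSumLabeling n m ℓ) {u : ℕ × ℕ} (hu : u ∈ Vnm n m)
    (hne : u ≠ (n + 2, 0)) : ℓ u < ℓ (n + 2, 0) := by
  have top : ∀ v ∈ Vnm n m, (∀ u ∈ Vnm n m, ℓ u ≤ ℓ v) → v = (n + 2, 0) := by
    intro v hv hvmax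
    by_contra hvz
    obtain ⟨p, hp, hpv, hs⟩ := C.exists_adj hv fun h => hvz (C.eq_mk_zero hv h (by omega))
    obtain ⟨w, hw, hsum⟩ := C.isLabel_add hv hp hpv.symm hs
    have := hvmax w hw
    have := C.one_le hp
    omega
  obtain ⟨w, hw, hwmax⟩ := Set.exists_max_image _ ℓ Vnm_finite ⟨_, C.isolated_mem⟩
  obtain rfl := top w hw hwmax
  refine (hwmax u hu).lt_of_ne fun h => hne (top u hu fun v hv => h ▸ hwmax v hv)

theorem isLabel_le (C : MinSumLabeling n m ℓ) {t : ℕ} (ht : IsLabel n m ℓ t) :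
    t ≤ ℓ (n + 2, 0) := by
  obtain ⟨w, hw, rfl⟩ := ht
  by_cases h : w = (n + 2, 0)
  · rw [h]
  · exact (C.label_lt_isolated hw h).le

theorem exists_isSecondMax (C : MinSumLabeling n m ℓ) : ∃ v, IsSecondMax n m ℓ v := by
  have hn := C.sixteen_le
  obtain ⟨v, ⟨hv, hvz⟩, hmax⟩ := Set.exists_max_image {u | u ∈ Vnm n m ∧ u.1 ≠ n + 2} ℓ
    (Vnm_finite.subset fun u hu => hu.1)
    ⟨(2, 0), C.mk_zero_mem le_rfl (by omega), by simp only; omega⟩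
  exact ⟨v, hv, hvz, fun u hu huz => hmax u ⟨hu, huz⟩⟩

theorem add_eq_of_isSecondMax (C : MinSumLabeling n m ℓ) {v u : ℕ × ℕ}
    (hv : IsSecondMax n m ℓ v) (hu : u ∈ Vnm n m) (hne : u ≠ v) (hs : v.1 + u.1 ∈ Sn n) :
    ℓ v + ℓ u = ℓ (n + 2, 0) := by
  obtain ⟨w, hw, hsum⟩ := C.isLabel_add hv.1 hu hne.symm hs
  have := C.one_le hu
  by_cases hwz : w.1 = n + 2
  · rwa [C.eq_mk_zero hw hwz (by omega)] at hsum
  · have := hv.2.2 w hw hwz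
    omega

/-- A second-largest label sits neither at coordinate `≤ n - 3` (there `ψ(2)` and `ψ(3)` would
get equal labels, which `(n - 1, 0)` tells apart) nor at `n - 2` (likewise `ψ(2)`, `ψ(4)` and
`(n - 3, 0)`). -/
theorem fst_of_isSecondMax (C : MinSumLabeling n m ℓ) {v : ℕ × ℕ} (hv : IsSecondMax n m ℓ v) :
    v.1 = n - 1 ∨ v = (n, 0) := by
  have hn := C.sixteen_le
  have hv1 := hv.1.1
  rw [mem_Sn] at hv1
  have hz := hv.2.1
  have separate : ∀ {p q : ℕ × ℕ} (w : ℕ × ℕ), p ∈ Vnm n m → q ∈ Vnm n m → w ∈ Vnm n m →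
      p ≠ v → q ≠ v → w.1 ≠ p.1 → w.1 ≠ q.1 → v.1 + p.1 ∈ Sn n → v.1 + q.1 ∈ Sn n →
      w.1 + p.1 ∈ Sn n → w.1 + q.1 ∉ Sn n → False := by
    intro p q w hp hq hw hpv hqv hwp hwq hvp hvq hs hs'
    have := C.add_eq_of_isSecondMax hv hp hpv hvp
    have := C.add_eq_of_isSecondMax hv hq hqv hvq
    exact hs' (C.mem_Sn_of_label_eq hw hp hq (ne_of_apply_ne Prod.fst hwp)
      (ne_of_apply_ne Prod.fst hwq) (by omega) hs)
  rcases (by omega : v.1 + 3 ≤ n ∨ v.1 = n - 2 ∨ v.1 = n - 1 ∨ v.1 = n) with h | h | h | h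
  · obtain ⟨p, hp, hp2, hpv⟩ := C.exists_fst_eq_ne (i := 2) le_rfl (by omega) v
    obtain ⟨q, hq, hq3, hqv⟩ := C.exists_fst_eq_ne (i := 3) (by omega) (by omega) v
    exact (separate (n - 1, 0) hq hp (C.mk_zero_mem (by omega) (by omega)) hqv hpv (by omega)
      (by omega) (by rw [mem_Sn]; omega) (by rw [mem_Sn]; omega) (by rw [mem_Sn]; omega)
      (by rw [mem_Sn]; omega)).elim
  · exact (separate (n - 3, 0) (C.mk_zero_mem le_rfl (by omega))
      (C.mk_zero_mem (i := 4) (by omega) (by omega)) (C.mk_zero_mem (by omega) (by omega))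
      (ne_of_apply_ne Prod.fst (by simp only; omega))
      (ne_of_apply_ne Prod.fst (by simp only; omega)) (by simp only; omega)
      (by simp only; omega) (by rw [mem_Sn]; omega) (by rw [mem_Sn]; omega)
      (by rw [mem_Sn]; omega) (by rw [mem_Sn]; omega)).elim
  · exact Or.inl h
  · exact Or.inr (C.eq_mk_zero hv.1 h (by omega))

theorem add_label_psi_of_isSecondMax (C : MinSumLabeling n m ℓ) {v u : ℕ × ℕ}
    (hv : IsSecondMax n m ℓ v) (h : v.1 = n - 1) (hu : u ∈ psi m 3) :
    ℓ v + ℓ u = ℓ (n + 2, 0) := by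
  have := C.sixteen_le
  have := hu.1
  exact C.add_eq_of_isSecondMax hv (C.mem_Vnm_of_mem_psi hu)
    (ne_of_apply_ne Prod.fst (by omega)) (by rw [mem_Sn]; omega)

theorem isLabel_f_add_psi (C : MinSumLabeling n m ℓ) {u : ℕ × ℕ} (hu : u ∈ psi m 3) :
    IsLabel n m ℓ (ℓ (n - 1, 0) + ℓ u) := by
  have := C.sixteen_le
  have := hu.1
  exact C.isLabel_add (C.mk_zero_mem (by omega) (by omega)) (C.mem_Vnm_of_mem_psi hu)
    (ne_of_apply_ne Prod.fst (by simp only; omega)) (by rw [mem_Sn]; simp only; omega)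

theorem not_isLabel_e_add_psi (C : MinSumLabeling n m ℓ) {u : ℕ × ℕ} (hu : u ∈ psi m 3) :
    ¬ IsLabel n m ℓ (ℓ (n - 2, 0) + ℓ u) := by
  have := C.sixteen_le
  have := hu.1
  exact C.not_isLabel_add (C.mk_zero_mem (by omega) (by omega)) (C.mem_Vnm_of_mem_psi hu)
    (ne_of_apply_ne Prod.fst (by simp only; omega)) (by rw [mem_Sn]; simp only; omega)

theorem not_isLabel_f_add (C : MinSumLabeling n m ℓ) {w : ℕ × ℕ} (hw : w ∈ Vnm n m)
    (h3 : w.1 ≠ 3) (hy : w.1 ≠ n - 1) : ¬ IsLabel n m ℓ (ℓ (n - 1, 0) + ℓ w) := by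
  have := C.sixteen_le
  have hw1 := hw.1
  rw [mem_Sn] at hw1
  exact C.not_isLabel_add (C.mk_zero_mem (by omega) (by omega)) hw
    (ne_of_apply_ne Prod.fst (by simp only; omega)) (by rw [mem_Sn]; simp only; omega)

theorem isLabel_add_psi (C : MinSumLabeling n m ℓ) {w u : ℕ × ℕ} (hw : w ∈ Vnm n m)
    (h4 : 4 ≤ w.1) (hw3 : w.1 + 3 ≤ n) (hu : u ∈ psi m 3) : IsLabel n m ℓ (ℓ w + ℓ u) :=
  C.isLabel_add hw (C.mem_Vnm_of_mem_psi hu) (ne_of_apply_ne Prod.fst (by rw [hu.1]; omega))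
    (by rw [mem_Sn, hu.1]; omega)

theorem isLabel_psi_add_psi (C : MinSumLabeling n m ℓ) {u v : ℕ × ℕ} (hu : u ∈ psi m 3)
    (hv : v ∈ psi m 3) (hne : u ≠ v) : IsLabel n m ℓ (ℓ u + ℓ v) := by
  have := C.sixteen_le
  exact C.isLabel_add (C.mem_Vnm_of_mem_psi hu) (C.mem_Vnm_of_mem_psi hv) hne
    (by rw [mem_Sn, hu.1, hv.1]; omega)

end MinSumLabeling

structure SecondMaxAtN (n : ℕ) (m : ℕ → ℕ) (ℓ : ℕ × ℕ → ℕ) : Prop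
    extends MinSumLabeling n m ℓ where
  label_lt : ∀ u ∈ Vnm n m, u.1 ≠ n + 2 → u ≠ (n, 0) → ℓ u < ℓ (n, 0)

structure Psi3Pair (n : ℕ) (m : ℕ → ℕ) (ℓ : ℕ × ℕ → ℕ) (u₁ u₂ : ℕ × ℕ) : Prop
    extends SecondMaxAtN n m ℓ where
  mem₁ : u₁ ∈ psi m 3
  mem₂ : u₂ ∈ psi m 3
  lt : ℓ u₁ < ℓ u₂

theorem MinSumLabeling.secondMaxAtN (C : MinSumLabeling n m ℓ)
    (h : ∀ v, IsSecondMax n m ℓ v → v.1 ≠ n - 1) : SecondMaxAtN n m ℓ := by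
  have top : ∀ v, IsSecondMax n m ℓ v → v = (n, 0) := fun v hv =>
    (C.fst_of_isSecondMax hv).resolve_left (h v hv)
  obtain ⟨v, hv⟩ := C.exists_isSecondMax
  obtain rfl := top v hv
  exact ⟨C, fun u hu huz hux => (hv.2.2 u hu huz).lt_of_ne fun he =>
    hux (top u ⟨hu, huz, fun w hw hwz => he ▸ hv.2.2 w hw hwz⟩)⟩

def gap (n : ℕ) (ℓ : ℕ × ℕ → ℕ) : ℕ := ℓ (n + 2, 0) - ℓ (n, 0)

namespace SecondMaxAtN

theorem isSecondMax (H : SecondMaxAtN n m ℓ) : IsSecondMax n m ℓ (n, 0) := by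
  have hn := H.sixteen_le
  refine ⟨H.mk_zero_mem (by omega) le_rfl, by simp only; omega, fun u hu huz => ?_⟩
  by_cases hux : u = (n, 0)
  · rw [hux]
  · exact (H.label_lt u hu huz hux).le

theorem label_lt_x (H : SecondMaxAtN n m ℓ) {u : ℕ × ℕ} (hu : u ∈ Vnm n m)
    (hx : u.1 ≠ n) (hz : u.1 ≠ n + 2) : ℓ u < ℓ (n, 0) :=
  H.label_lt u hu hz (ne_of_apply_ne Prod.fst hx)

theorem f_lt_x (H : SecondMaxAtN n m ℓ) : ℓ (n - 1, 0) < ℓ (n, 0) := by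
  have := H.sixteen_le
  exact H.label_lt_x (H.mk_zero_mem (by omega) (by omega)) (by simp only; omega)
    (by simp only; omega)

theorem e_lt_x (H : SecondMaxAtN n m ℓ) : ℓ (n - 2, 0) < ℓ (n, 0) := by
  have := H.sixteen_le
  exact H.label_lt_x (H.mk_zero_mem (by omega) (by omega)) (by simp only; omega)
    (by simp only; omega)

theorem x_lt_M (H : SecondMaxAtN n m ℓ) : ℓ (n, 0) < ℓ (n + 2, 0) :=
  H.label_lt_isolated (H.mk_zero_mem (i := n) (by have := H.sixteen_le; omega) le_rfl)
    (ne_of_apply_ne Prod.fst (by simp))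

theorem M_eq_x_add_gap (H : SecondMaxAtN n m ℓ) : ℓ (n + 2, 0) = ℓ (n, 0) + gap n ℓ := by
  have := H.x_lt_M
  unfold gap
  omega

theorem gap_pos (H : SecondMaxAtN n m ℓ) : 0 < gap n ℓ := by
  have := H.x_lt_M
  unfold gap
  omega

theorem label_eq_gap (H : SecondMaxAtN n m ℓ) {u : ℕ × ℕ} (hu : u ∈ Vnm n m) (h2 : u.1 = 2) :
    ℓ u = gap n ℓ := by
  have hn := H.sixteen_le
  have := H.add_eq_of_isSecondMax H.isSecondMax hu (ne_of_apply_ne Prod.fst (by simp only; omega))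
    (by rw [mem_Sn]; simp only; omega)
  have := H.M_eq_x_add_gap
  omega

theorem isLabel_gap (H : SecondMaxAtN n m ℓ) : IsLabel n m ℓ (gap n ℓ) := by
  have hp := H.mk_zero_mem (i := 2) le_rfl (by have := H.sixteen_le; omega)
  exact ⟨_, hp, (H.label_eq_gap hp rfl).symm⟩

theorem fst_eq_two_of_label_eq_gap (H : SecondMaxAtN n m ℓ) {w : ℕ × ℕ} (hw : w ∈ Vnm n m)
    (hl : ℓ w = gap n ℓ) : w.1 = 2 ∨ w = (n, 0) := by
  have hn := H.sixteen_le
  by_cases hx : w = (n, 0)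
  · exact Or.inr hx
  obtain ⟨p, hp, hp2, hpw⟩ := H.exists_fst_eq_ne (i := 2) le_rfl (by omega) w
  have hs := H.mem_Sn_of_label_eq (H.mk_zero_mem (i := n) (by omega) le_rfl) hp hw
    (ne_of_apply_ne Prod.fst (by simp only; omega)) (Ne.symm hx)
    (by rw [H.label_eq_gap hp hp2, hl]) (by rw [mem_Sn]; simp only; omega)
  have hw1 := hw.1
  rw [mem_Sn] at hs hw1
  simp only at hs
  omega

theorem isLabel_add_gap (H : SecondMaxAtN n m ℓ) {w : ℕ × ℕ} (hw : w ∈ Vnm n m)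
    (hy : w.1 ≠ n - 1) (hz : w.1 ≠ n + 2) : IsLabel n m ℓ (ℓ w + gap n ℓ) := by
  have hn := H.sixteen_le
  obtain ⟨p, hp, hp2, hpw⟩ := H.exists_fst_eq_ne (i := 2) le_rfl (by omega) w
  have hw1 := hw.1
  rw [mem_Sn] at hw1
  rw [← H.label_eq_gap hp hp2]
  exact H.isLabel_add hw hp hpw.symm (by rw [mem_Sn]; omega)

theorem not_isLabel_f_add_gap (H : SecondMaxAtN n m ℓ) :
    ¬ IsLabel n m ℓ (ℓ (n - 1, 0) + gap n ℓ) := by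
  have hn := H.sixteen_le
  have hp := H.mk_zero_mem (i := 2) le_rfl (by omega)
  rw [← H.label_eq_gap hp rfl]
  exact H.not_isLabel_add (H.mk_zero_mem (by omega) (by omega)) hp
    (ne_of_apply_ne Prod.fst (by simp only; omega)) (by rw [mem_Sn]; simp only; omega)

theorem eq_of_label_eq_f (H : SecondMaxAtN n m ℓ) {w : ℕ × ℕ} (hw : w ∈ Vnm n m)
    (hl : ℓ w = ℓ (n - 1, 0)) : w = (n - 1, 0) := by
  have hn := H.sixteen_le
  by_cases hy : w.1 = n - 1
  · exact H.eq_mk_zero (k := n - 1) hw hy (by omega)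
  by_cases hz : w.1 = n + 2
  · have := H.f_lt_x
    have := H.x_lt_M
    rw [H.eq_mk_zero hw hz (by omega)] at hl
    omega
  exact absurd (hl ▸ H.isLabel_add_gap hw hy hz) H.not_isLabel_f_add_gap

theorem label_ne_gap (H : SecondMaxAtN n m ℓ) {w : ℕ × ℕ} (hw : w ∈ Vnm n m) (h2 : w.1 ≠ 2)
    (hx : w.1 ≠ n) : ℓ w ≠ gap n ℓ := fun h => by
  rcases H.fst_eq_two_of_label_eq_gap hw h with h' | h'
  · exact h2 h'
  · exact hx (congrArg Prod.fst h')

theorem label_ne_f (H : SecondMaxAtN n m ℓ) {w : ℕ × ℕ} (hw : w ∈ Vnm n m)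
    (hy : w.1 ≠ n - 1) : ℓ w ≠ ℓ (n - 1, 0) := fun h =>
  hy (congrArg Prod.fst (H.eq_of_label_eq_f hw h))

theorem e_ne_f (H : SecondMaxAtN n m ℓ) : ℓ (n - 2, 0) ≠ ℓ (n - 1, 0) := by
  have := H.sixteen_le
  exact H.label_ne_f (H.mk_zero_mem (by omega) (by omega)) (by simp only; omega)

theorem f_ne_gap (H : SecondMaxAtN n m ℓ) : ℓ (n - 1, 0) ≠ gap n ℓ := by
  have := H.sixteen_le
  exact H.label_ne_gap (H.mk_zero_mem (by omega) (by omega)) (by simp only; omega)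
    (by simp only; omega)

theorem isLabel_add_gap_of_ne (H : SecondMaxAtN n m ℓ) {t : ℕ} (ht : IsLabel n m ℓ t)
    (hf : t ≠ ℓ (n - 1, 0)) (hM : t ≠ ℓ (n + 2, 0)) : IsLabel n m ℓ (t + gap n ℓ) := by
  obtain ⟨w, hw, rfl⟩ := ht
  refine H.isLabel_add_gap hw (fun hy => hf ?_) (fun hz => hM ?_)
  · rw [H.eq_mk_zero hw hy (by omega)]
  · rw [H.eq_mk_zero hw hz (by omega)]

theorem exists_chain (H : SecondMaxAtN n m ℓ) {t : ℕ} (ht : IsLabel n m ℓ t) :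
    ∃ k, (t + k * gap n ℓ = ℓ (n - 1, 0) ∨ t + k * gap n ℓ = ℓ (n + 2, 0)) ∧
      ∀ j ≤ k, IsLabel n m ℓ (t + j * gap n ℓ) :=
  exists_progression_of_step H.gap_pos (fun _ => H.isLabel_le)
    (fun _ => H.isLabel_add_gap_of_ne) ht

theorem exists_f_add_label_psi (H : SecondMaxAtN n m ℓ) {u : ℕ × ℕ} (hu : u ∈ psi m 3) :
    ∃ k, ℓ (n - 1, 0) + ℓ u + k * gap n ℓ = ℓ (n + 2, 0) := by
  obtain ⟨k, hk, -⟩ := H.exists_chain (H.isLabel_f_add_psi hu)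
  have := H.one_le (H.mem_Vnm_of_mem_psi hu)
  exact ⟨k, hk.resolve_left (by omega)⟩

theorem label_psi_ne_f (H : SecondMaxAtN n m ℓ) {u : ℕ × ℕ} (hu : u ∈ psi m 3) :
    ℓ u ≠ ℓ (n - 1, 0) :=
  H.label_ne_f (H.mem_Vnm_of_mem_psi hu) (by rw [hu.1]; have := H.sixteen_le; omega)

theorem isLabel_cases (H : SecondMaxAtN n m ℓ) {v : ℕ} (hv : IsLabel n m ℓ v) :
    v = gap n ℓ ∨ (∃ w ∈ psi m 3, v = ℓ w) ∨
      (∃ w ∈ Vnm n m, 4 ≤ w.1 ∧ w.1 + 3 ≤ n ∧ v = ℓ w) ∨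
      v = ℓ (n - 2, 0) ∨ v = ℓ (n - 1, 0) ∨ v = ℓ (n, 0) ∨ v = ℓ (n + 2, 0) := by
  obtain ⟨w, hw, rfl⟩ := hv
  have hw1 := hw.1
  rw [mem_Sn] at hw1
  rcases (by omega : w.1 = 2 ∨ w.1 = 3 ∨ (4 ≤ w.1 ∧ w.1 + 3 ≤ n) ∨ w.1 = n - 2 ∨
    w.1 = n - 1 ∨ w.1 = n ∨ w.1 = n + 2) with h | h | h | h | h | h | h
  · exact Or.inl (H.label_eq_gap hw h)
  · exact Or.inr (Or.inl ⟨w, ⟨h, h ▸ hw.2⟩, rfl⟩)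
  · exact Or.inr (Or.inr (Or.inl ⟨w, hw, h.1, h.2, rfl⟩))
  all_goals
    rw [H.eq_mk_zero hw h (by omega)]
    simp

theorem natCast_eq_of_isLabel (H : SecondMaxAtN n m ℓ) {t : ℕ} (ht : IsLabel n m ℓ t) :
    (t : ZMod (gap n ℓ)) = ℓ (n - 1, 0) ∨ (t : ZMod (gap n ℓ)) = ℓ (n + 2, 0) := by
  obtain ⟨k, hk, -⟩ := H.exists_chain ht
  rcases hk with hk | hk <;> [left; right] <;> simp [← hk]

/-- Modulo the gap every label is `≡ f` or `≡ M`; the labels `1`, `gap`, `ℓ u` and `ℓ u + ℓ v` of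
two vertices `u ≠ v` of `ψ(3)` cannot all satisfy this when the gap exceeds `2`. -/
theorem gap_le_two (H : SecondMaxAtN n m ℓ) : gap n ℓ ≤ 2 := by
  have hu := H.three_zero_mem_psi
  have hv := H.three_one_mem_psi
  have hf : ∀ {w}, w ∈ psi m 3 → (ℓ (n - 1, 0) : ZMod (gap n ℓ)) + ℓ w = ℓ (n + 2, 0) := by
    intro w hw
    obtain ⟨k, hk⟩ := H.exists_f_add_label_psi hw
    simp [← hk]
  by_contra h3
  have h2 := two_eq_zero_of_residues (hf hu) (hf hv)
    (by exact_mod_cast H.natCast_eq_of_isLabel H.isLabel_one)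
    (by simpa using H.natCast_eq_of_isLabel H.isLabel_gap)
    (H.natCast_eq_of_isLabel ⟨_, H.mem_Vnm_of_mem_psi hu, rfl⟩)
    (by exact_mod_cast H.natCast_eq_of_isLabel (H.isLabel_psi_add_psi hu hv (by simp)))
  rw [show (2 : ZMod (gap n ℓ)) = ((2 : ℕ) : ZMod (gap n ℓ)) by norm_cast,
    ZMod.natCast_eq_zero_iff] at h2
  have := Nat.le_of_dvd (by norm_num) h2
  omega

/-! ### `gap n ℓ = 1` -/

theorem isLabel_of_le_f (H : SecondMaxAtN n m ℓ) (hc : gap n ℓ = 1) {v : ℕ} (h1 : 1 ≤ v)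
    (hv : v ≤ ℓ (n - 1, 0)) : IsLabel n m ℓ v := by
  have := H.f_lt_x
  have := H.M_eq_x_add_gap
  obtain ⟨k, hk, hall⟩ := H.exists_chain H.isLabel_one
  simp only [hc, mul_one] at hk hall this
  rcases hk with hk | hk
  · have := hall (v - 1) (by omega)
    rwa [show 1 + (v - 1) = v by omega] at this
  · refine absurd ?_ H.not_isLabel_f_add_gap
    rw [hc, add_comm]
    exact hall _ (by omega)

theorem isLabel_of_f_lt (H : SecondMaxAtN n m ℓ) (hc : gap n ℓ = 1) {v w : ℕ}
    (hv : IsLabel n m ℓ v) (hfv : ℓ (n - 1, 0) < v) (hvw : v ≤ w) (hw : w ≤ ℓ (n + 2, 0)) :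
    IsLabel n m ℓ w := by
  obtain ⟨k, hk, hall⟩ := H.exists_chain hv
  simp only [hc, mul_one] at hk hall
  have := hall (w - v) (by omega)
  rwa [show v + (w - v) = w by omega] at this

theorem label_le_f_or (H : SecondMaxAtN n m ℓ) (hc : gap n ℓ = 1) (hf : ℓ (n - 1, 0) ≤ 3)
    {w : ℕ × ℕ} (hw : w ∈ Vnm n m) (h3 : w.1 ≠ 3) (hy : w.1 ≠ n - 1) (hx : w.1 ≠ n)
    (hz : w.1 ≠ n + 2) :
    ℓ w ≤ ℓ (n - 1, 0) ∨ (ℓ (n - 1, 0) < ℓ w ∧ ℓ w + 2 = ℓ (n + 2, 0)) := by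
  have := H.label_lt_x hw hx hz
  have := H.M_eq_x_add_gap
  rw [hc] at this
  by_contra! h
  exact H.not_isLabel_f_add hw h3 hy
    (H.isLabel_of_f_lt hc ⟨w, hw, rfl⟩ (by omega) (by omega) (by omega))

/-- Among the pairwise adjacent vertices `(5, 0)`, `(7, 0)`, `(9, 0)`, two would get label `2`
(summing to `f + 1`) or two would get label `M - 2` (summing beyond `M`). -/
theorem four_le_f (H : SecondMaxAtN n m ℓ) (hc : gap n ℓ = 1) : 4 ≤ ℓ (n - 1, 0) := by
  have hn := H.sixteen_le
  have := H.f_ne_gap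
  have := H.one_le (H.mk_zero_mem (i := n - 1) (by omega) (by omega))
  by_contra hf
  have alt : ∀ i, 4 ≤ i → i + 3 ≤ n →
      (2 ≤ ℓ (i, 0) ∧ ℓ (i, 0) < ℓ (n - 1, 0)) ∨
        (ℓ (n - 1, 0) < ℓ (i, 0) ∧ ℓ (i, 0) + 2 = ℓ (n + 2, 0)) := by
    intro i hi4 hi
    have hw := H.mk_zero_mem (i := i) (by omega) (by omega)
    rcases H.label_le_f_or hc (by omega) hw (by simp only; omega) (by simp only; omega)
      (by simp only; omega) (by simp only; omega) with h | h
    · have := hc ▸ H.label_ne_gap hw (by simp only; omega) (by simp only; omega)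
      have := H.label_ne_f hw (by simp only; omega)
      have := H.one_le hw
      exact Or.inl ⟨by omega, by omega⟩
    · exact Or.inr h
  have pair : ∀ i j, 4 ≤ i → i < j → i + j ≤ n →
      ℓ (i, 0) + ℓ (j, 0) ≤ ℓ (n + 2, 0) ∧ ℓ (i, 0) + ℓ (j, 0) ≠ ℓ (n - 1, 0) + 1 := by
    intro i j hi hij hs
    have hl := H.isLabel_add (H.mk_zero_mem (i := i) (by omega) (by omega))
      (H.mk_zero_mem (i := j) (by omega) (by omega))
      (ne_of_apply_ne Prod.fst (by simp only; omega)) (by rw [mem_Sn]; simp only; omega)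
    refine ⟨H.isLabel_le hl, fun h => H.not_isLabel_f_add_gap ?_⟩
    rwa [hc, ← h]
  have := alt 5 (by omega) (by omega)
  have := alt 7 (by omega) (by omega)
  have := alt 9 (by omega) (by omega)
  have := pair 5 7 (by omega) (by omega) (by omega)
  have := pair 5 9 (by omega) (by omega) (by omega)
  have := pair 7 9 (by omega) (by omega) (by omega)
  omega

theorem two_le_label_psi (H : SecondMaxAtN n m ℓ) (hc : gap n ℓ = 1) {u : ℕ × ℕ}
    (hu : u ∈ psi m 3) : 2 ≤ ℓ u := by
  have := H.sixteen_le
  have := H.label_ne_gap (H.mem_Vnm_of_mem_psi hu) (by rw [hu.1]; omega) (by rw [hu.1]; omega)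
  have := H.one_le (H.mem_Vnm_of_mem_psi hu)
  omega

/-- Any other carrier would be adjacent to `(n - 1, 0)` or to `u`. -/
theorem eq_e_of_isLabel (H : SecondMaxAtN n m ℓ) (hc : gap n ℓ = 1) {u : ℕ × ℕ}
    (hu : u ∈ psi m 3) (hu4 : 4 ≤ ℓ u) {v : ℕ} (hv : IsLabel n m ℓ v)
    (hfv : ℓ (n - 1, 0) < v) (hvM : v + 2 ≤ ℓ (n + 2, 0)) (hMv : ℓ (n + 2, 0) ≤ v + 3) :
    v = ℓ (n - 2, 0) := by
  have := H.four_le_f hc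
  have := H.M_eq_x_add_gap
  rcases H.isLabel_cases hv with h | ⟨w, hw, rfl⟩ | ⟨w, hw, h4, h3, rfl⟩ | h | h | h | h
  · omega
  · obtain ⟨k, hk⟩ := H.exists_f_add_label_psi hw
    rw [hc] at hk
    omega
  · have := H.isLabel_le (H.isLabel_add_psi hw h4 h3 hu)
    omega
  · exact h
  all_goals omega

theorem le_f_or_of_isLabel (H : SecondMaxAtN n m ℓ) (hc : gap n ℓ = 1) {u : ℕ × ℕ}
    (hu : u ∈ psi m 3) (hu4 : 4 ≤ ℓ u) {v : ℕ} (hv : IsLabel n m ℓ v) :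
    v ≤ ℓ (n - 1, 0) ∨ ℓ (n + 2, 0) ≤ v + 2 := by
  by_contra! h
  have := H.isLabel_le hv
  have h3 := H.eq_e_of_isLabel hc hu hu4
    (H.isLabel_of_f_lt hc hv h.1 (w := ℓ (n + 2, 0) - 3) (by omega) (by omega)) (by omega)
    (by omega) (by omega)
  have h2 := H.eq_e_of_isLabel hc hu hu4
    (H.isLabel_of_f_lt hc hv h.1 (w := ℓ (n + 2, 0) - 2) (by omega) (by omega)) (by omega)
    (by omega) (by omega)
  omega

theorem f_add_label_psi_mem (H : SecondMaxAtN n m ℓ) (hc : gap n ℓ = 1) {u w : ℕ × ℕ}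
    (hu : u ∈ psi m 3) (hu4 : 4 ≤ ℓ u) (hw : w ∈ psi m 3) :
    ℓ (n + 2, 0) ≤ ℓ (n - 1, 0) + ℓ w + 2 ∧ ℓ (n - 1, 0) + ℓ w ≤ ℓ (n + 2, 0) := by
  have h := H.isLabel_f_add_psi hw
  have := H.one_le (H.mem_Vnm_of_mem_psi hw)
  have := H.le_f_or_of_isLabel hc hu hu4 h
  exact ⟨by omega, H.isLabel_le h⟩

end SecondMaxAtN

namespace Psi3Pair

theorem ne (P : Psi3Pair n m ℓ u₁ u₂) : u₁ ≠ u₂ := by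
  rintro rfl
  exact lt_irrefl _ P.lt

theorem four_le_label_snd (P : Psi3Pair n m ℓ u₁ u₂) (hc : gap n ℓ = 1) : 4 ≤ ℓ u₂ := by
  have := P.two_le_label_psi hc P.mem₁
  have := P.lt
  have := P.e_lt_x
  have := P.M_eq_x_add_gap
  have he := P.mk_zero_mem (i := n - 2) (by have := P.sixteen_le; omega) (by omega)
  by_contra h
  rcases lt_or_gt_of_ne P.e_ne_f with hef | hef
  · have : ℓ (n - 2, 0) + 1 = ℓ (n - 1, 0) := by
      by_contra h'
      exact P.not_isLabel_e_add_psi P.mem₁ (P.isLabel_of_le_f hc (by omega) (by omega))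
    exact P.not_isLabel_e_add_psi P.mem₂ (by convert P.isLabel_f_add_psi P.mem₁ using 1; omega)
  · exact P.not_isLabel_e_add_psi P.mem₁
      (P.isLabel_of_f_lt hc ⟨_, he, rfl⟩ hef (by omega) (by omega))

theorem e_lt_f_or (P : Psi3Pair n m ℓ u₁ u₂) (hc : gap n ℓ = 1) :
    ℓ (n - 2, 0) + 1 ≤ ℓ (n - 1, 0) ∨ ℓ (n - 2, 0) + 2 = ℓ (n + 2, 0) := by
  have := P.le_f_or_of_isLabel hc P.mem₂ (P.four_le_label_snd hc)
    ⟨_, P.mk_zero_mem (i := n - 2) (by have := P.sixteen_le; omega) (by omega), rfl⟩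
  have := P.e_ne_f
  have := P.e_lt_x
  have := P.M_eq_x_add_gap
  omega

/-- Above `f` only `M - 1` and `M` are labels, so `ℓ u₁ = M - f - 1` and `ℓ u₂ = M - f`; then
the label `f - 1` has no possible carrier. -/
theorem false_of_e_lt_f (P : Psi3Pair n m ℓ u₁ u₂) (hc : gap n ℓ = 1)
    (he : ℓ (n - 2, 0) + 1 ≤ ℓ (n - 1, 0)) : False := by
  have := P.sixteen_le
  have ht₂ := P.four_le_label_snd hc
  have := P.four_le_f hc
  have := P.two_le_label_psi hc P.mem₁
  have := P.lt
  have := P.f_lt_x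
  have := P.M_eq_x_add_gap
  have top : ∀ v, IsLabel n m ℓ v → v ≤ ℓ (n - 1, 0) ∨ ℓ (n + 2, 0) ≤ v + 1 := by
    intro v hv
    have := P.le_f_or_of_isLabel hc P.mem₂ ht₂ hv
    by_contra! h
    have := P.eq_e_of_isLabel hc P.mem₂ ht₂ hv h.1 (by omega) (by omega)
    omega
  have h₁ := P.isLabel_f_add_psi P.mem₁
  have h₂ := P.isLabel_f_add_psi P.mem₂
  have := top _ h₁
  have := top _ h₂
  have := P.isLabel_le h₂
  have hsum := P.isLabel_psi_add_psi P.mem₁ P.mem₂ P.ne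
  have := top _ hsum
  have := P.isLabel_le hsum
  have := P.label_psi_ne_f P.mem₂
  rcases P.isLabel_cases (P.isLabel_of_le_f hc (v := ℓ (n - 1, 0) - 1) (by omega) (by omega))
    with h | ⟨w, hw, hwl⟩ | ⟨w, hw, h4, h3, hwl⟩ | h | h | h | h
  · omega
  · have := top _ (P.isLabel_f_add_psi hw)
    have := P.isLabel_le (P.isLabel_f_add_psi hw)
    omega
  · have := top _ (P.isLabel_add_psi hw h4 h3 P.mem₁)
    omega
  · refine P.not_isLabel_e_add_psi P.mem₂ ⟨_, P.mk_zero_mem (i := n) (by omega) le_rfl, ?_⟩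
    omega
  all_goals omega

theorem three_le_label_psi (P : Psi3Pair n m ℓ u₁ u₂) (hc : gap n ℓ = 1)
    (he : ℓ (n - 2, 0) + 2 = ℓ (n + 2, 0)) {w : ℕ × ℕ} (hw : w ∈ psi m 3) : 3 ≤ ℓ w := by
  have := P.two_le_label_psi hc hw
  by_contra h
  exact P.not_isLabel_e_add_psi hw ⟨_, P.isolated_mem, by omega⟩

theorem isLabel_cases_lt_f (P : Psi3Pair n m ℓ u₁ u₂) (hc : gap n ℓ = 1) {v : ℕ} (hv2 : 2 ≤ v)
    (hvf : v + 1 ≤ ℓ (n - 1, 0)) :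
    (∃ w ∈ psi m 3, v = ℓ w) ∨ v = ℓ (n - 2, 0) ∨
      (IsLabel n m ℓ (v + ℓ u₁) ∧ IsLabel n m ℓ (v + ℓ u₂)) := by
  have := P.f_lt_x
  have := P.M_eq_x_add_gap
  rcases P.isLabel_cases (P.isLabel_of_le_f hc (v := v) (by omega) (by omega))
    with h | h | ⟨w, hw, h4, h3, rfl⟩ | h | h | h | h
  · omega
  · exact Or.inl h
  · exact Or.inr (Or.inr ⟨P.isLabel_add_psi hw h4 h3 P.mem₁, P.isLabel_add_psi hw h4 h3 P.mem₂⟩)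
  · exact Or.inr (Or.inl h)
  all_goals omega

theorem false_of_labels_eq_f_sub (P : Psi3Pair n m ℓ u₁ u₂) (hc : gap n ℓ = 1)
    (he : ℓ (n - 2, 0) + 2 = ℓ (n + 2, 0)) (hM : ℓ (n + 2, 0) + 1 = 2 * ℓ (n - 1, 0))
    (h₂ : ℓ u₂ + 1 = ℓ (n - 1, 0)) : False := by
  have ht₂ := P.four_le_label_snd hc
  have upper := fun {v} (hv : IsLabel n m ℓ v) => P.le_f_or_of_isLabel hc P.mem₂ ht₂ hv
  rcases P.isLabel_cases_lt_f hc (v := ℓ (n - 1, 0) - 3) (by omega) (by omega)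
    with ⟨w, hw, hwl⟩ | h | ⟨-, h⟩
  · have := P.three_le_label_psi hc he hw
    have := upper (P.isLabel_psi_add_psi hw P.mem₂ (by rintro rfl; omega))
    omega
  · omega
  · have := upper h
    omega

theorem false_of_label_psi_eq_f_sub_one (P : Psi3Pair n m ℓ u₁ u₂) (hc : gap n ℓ = 1)
    (he : ℓ (n - 2, 0) + 2 = ℓ (n + 2, 0)) {w : ℕ × ℕ} (hw : w ∈ psi m 3)
    (hwl : ℓ (n - 1, 0) - 1 = ℓ w) : False := by
  have ht₂ := P.four_le_label_snd hc
  have := P.four_le_f hc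
  have := P.lt
  have := P.three_le_label_psi hc he P.mem₁
  have := P.label_psi_ne_f P.mem₁
  have := P.label_psi_ne_f P.mem₂
  have := P.f_add_label_psi_mem hc P.mem₂ ht₂ hw
  have := P.f_add_label_psi_mem hc P.mem₂ ht₂ P.mem₁
  have := P.f_add_label_psi_mem hc P.mem₂ ht₂ P.mem₂
  have := P.le_f_or_of_isLabel hc P.mem₂ ht₂ (P.isLabel_psi_add_psi P.mem₁ P.mem₂ P.ne)
  have := P.le_f_or_of_isLabel hc P.mem₂ ht₂ ⟨u₂, P.mem_Vnm_of_mem_psi P.mem₂, rfl⟩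
  by_cases h : ℓ (n + 2, 0) + 1 = 2 * ℓ (n - 1, 0) ∧ ℓ u₂ + 1 = ℓ (n - 1, 0)
  · exact P.false_of_labels_eq_f_sub hc he h.1 h.2
  · omega

theorem false_of_isLabel_f_sub_one_add (P : Psi3Pair n m ℓ u₁ u₂) (hc : gap n ℓ = 1)
    (he : ℓ (n - 2, 0) + 2 = ℓ (n + 2, 0)) (h₁ : IsLabel n m ℓ (ℓ (n - 1, 0) - 1 + ℓ u₁)) :
    False := by
  have ht₂ := P.four_le_label_snd hc
  have upper := fun {v} (hv : IsLabel n m ℓ v) => P.le_f_or_of_isLabel hc P.mem₂ ht₂ hv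
  have := P.four_le_f hc
  have := P.lt
  have := P.three_le_label_psi hc he P.mem₁
  have := P.label_psi_ne_f P.mem₁
  have := P.label_psi_ne_f P.mem₂
  have := P.f_add_label_psi_mem hc P.mem₂ ht₂ P.mem₁
  have := P.f_add_label_psi_mem hc P.mem₂ ht₂ P.mem₂
  have := upper h₁
  have hsum := P.isLabel_psi_add_psi P.mem₁ P.mem₂ P.ne
  have := P.isLabel_le hsum
  rcases upper hsum with hs | hs
  · rcases P.isLabel_cases_lt_f hc (v := ℓ (n - 1, 0) - 2) (by omega) (by omega)
      with ⟨w, hw, hwl⟩ | h | ⟨h, -⟩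
    · have := upper (P.isLabel_psi_add_psi hw P.mem₁ (by rintro rfl; omega))
      omega
    · omega
    · have := upper h
      omega
  · by_cases h : ℓ (n + 2, 0) + 1 = 2 * ℓ (n - 1, 0)
    · exact P.false_of_labels_eq_f_sub hc he h (by omega)
    · omega

theorem false_of_e_eq (P : Psi3Pair n m ℓ u₁ u₂) (hc : gap n ℓ = 1)
    (he : ℓ (n - 2, 0) + 2 = ℓ (n + 2, 0)) : False := by
  have := P.four_le_f hc
  have := P.f_lt_x
  have := P.M_eq_x_add_gap
  rcases P.isLabel_cases_lt_f hc (v := ℓ (n - 1, 0) - 1) (by omega) (by omega)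
    with ⟨w, hw, hwl⟩ | h | ⟨h₁, -⟩
  · exact P.false_of_label_psi_eq_f_sub_one hc he hw hwl
  · omega
  · exact P.false_of_isLabel_f_sub_one_add hc he h₁

theorem false_of_gap_eq_one (P : Psi3Pair n m ℓ u₁ u₂) (hc : gap n ℓ = 1) : False :=
  (P.e_lt_f_or hc).elim (P.false_of_e_lt_f hc) (P.false_of_e_eq hc)

end Psi3Pair

/-! ### `gap n ℓ = 2` -/

namespace SecondMaxAtN

theorem f_mod_two_ne (H : SecondMaxAtN n m ℓ) (hc : gap n ℓ = 2) :
    ℓ (n - 1, 0) % 2 ≠ ℓ (n + 2, 0) % 2 := by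
  obtain ⟨k₁, hk₁, -⟩ := H.exists_chain H.isLabel_one
  obtain ⟨k₂, hk₂, -⟩ := H.exists_chain H.isLabel_gap
  rw [hc] at hk₁ hk₂
  omega

theorem isLabel_of_mod_M (H : SecondMaxAtN n m ℓ) (hc : gap n ℓ = 2) {v : ℕ} (h1 : 1 ≤ v)
    (hv : v ≤ ℓ (n + 2, 0)) (hmod : v % 2 = ℓ (n + 2, 0) % 2) : IsLabel n m ℓ v := by
  have := H.f_mod_two_ne hc
  obtain ⟨k₁, hk₁, hall₁⟩ := H.exists_chain H.isLabel_one
  obtain ⟨k₂, hk₂, hall₂⟩ := H.exists_chain H.isLabel_gap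
  rw [hc] at hk₁ hk₂ hall₂
  rcases Nat.mod_two_eq_zero_or_one v with h | h
  · have := hall₂ ((v - 2) / 2) (by omega)
    rwa [show 2 + (v - 2) / 2 * 2 = v by omega] at this
  · have := hall₁ ((v - 1) / 2) (by omega)
    rwa [hc, show 1 + (v - 1) / 2 * 2 = v by omega] at this

theorem le_f_of_mod_f (H : SecondMaxAtN n m ℓ) (hc : gap n ℓ = 2) {v : ℕ}
    (hv : IsLabel n m ℓ v) (hmod : v % 2 = ℓ (n - 1, 0) % 2) : v ≤ ℓ (n - 1, 0) := by
  have := H.f_mod_two_ne hc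
  obtain ⟨k, hk, -⟩ := H.exists_chain hv
  rw [hc] at hk
  omega

theorem label_psi_odd (H : SecondMaxAtN n m ℓ) (hc : gap n ℓ = 2) {u : ℕ × ℕ}
    (hu : u ∈ psi m 3) : ℓ u % 2 = 1 ∧ ℓ (n - 1, 0) + ℓ u ≤ ℓ (n + 2, 0) := by
  have := H.f_mod_two_ne hc
  obtain ⟨k, hk⟩ := H.exists_f_add_label_psi hu
  rw [hc] at hk
  omega

theorem label_psi_add_two_le_f (H : SecondMaxAtN n m ℓ) (hc : gap n ℓ = 2)
    (hM : ℓ (n + 2, 0) % 2 = 0) {u : ℕ × ℕ} (hu : u ∈ psi m 3) : ℓ u + 2 ≤ ℓ (n - 1, 0) := by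
  have := H.f_mod_two_ne hc
  have := H.label_psi_odd hc hu
  have := H.le_f_of_mod_f hc ⟨u, H.mem_Vnm_of_mem_psi hu, rfl⟩ (by omega)
  have := H.label_psi_ne_f hu
  omega

theorem e_mod_two (H : SecondMaxAtN n m ℓ) (hc : gap n ℓ = 2) :
    ℓ (n - 2, 0) % 2 = ℓ (n + 2, 0) % 2 := by
  have hn := H.sixteen_le
  have hu := H.three_zero_mem_psi
  have := H.f_mod_two_ne hc
  have := H.label_psi_odd hc hu
  by_contra h
  have := H.le_f_of_mod_f hc ⟨_, H.mk_zero_mem (i := n - 2) (by omega) (by omega), rfl⟩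
    (by omega)
  exact H.not_isLabel_e_add_psi hu (H.isLabel_of_mod_M hc (by omega) (by omega) (by omega))

/-- Otherwise `(5, 0)` and `(7, 0)` would both carry label `4`, and `8 > f` would be a label of
the parity of `f`. -/
theorem eight_le_f (H : SecondMaxAtN n m ℓ) (hc : gap n ℓ = 2) (hM : ℓ (n + 2, 0) % 2 = 1)
    {u : ℕ × ℕ} (hu : u ∈ psi m 3) (hu3 : 3 ≤ ℓ u) : 8 ≤ ℓ (n - 1, 0) := by
  have hn := H.sixteen_le
  have := H.f_mod_two_ne hc
  have := H.f_ne_gap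
  have := H.f_lt_x
  have := H.M_eq_x_add_gap
  have := H.label_psi_odd hc hu
  by_contra hf
  have alt : ∀ i, 4 ≤ i → i + 3 ≤ n →
      ℓ (i, 0) % 2 = 0 ∧ 2 < ℓ (i, 0) ∧ ℓ (i, 0) < ℓ (n - 1, 0) := by
    intro i hi4 hi
    have hw := H.mk_zero_mem (i := i) (by omega) (by omega)
    have := H.one_le hw
    by_cases hodd : ℓ (i, 0) % 2 = 1
    · have := H.le_f_of_mod_f hc (H.isLabel_add_psi hw (by simp only; omega)
        (by simp only; omega) hu) (by omega)
      exact (H.not_isLabel_f_add hw (by simp only; omega) (by simp only; omega)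
        (H.isLabel_of_mod_M hc (by omega) (by omega) (by omega))).elim
    · have := H.le_f_of_mod_f hc ⟨_, hw, rfl⟩ (by omega)
      have := hc ▸ H.label_ne_gap hw (by simp only; omega) (by simp only; omega)
      have := H.label_ne_f hw (by simp only; omega)
      omega
  have := alt 5 (by omega) (by omega)
  have := alt 7 (by omega) (by omega)
  have := H.le_f_of_mod_f hc (H.isLabel_add (H.mk_zero_mem (i := 5) (by omega) (by omega))
    (H.mk_zero_mem (i := 7) (by omega) (by omega)) (by simp) (by rw [mem_Sn]; simp only; omega))
    (by omega)
  omega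

end SecondMaxAtN

namespace Psi3Pair

theorem eq_e_of_isLabel_mod_two (P : Psi3Pair n m ℓ u₁ u₂) (hc : gap n ℓ = 2) {v : ℕ}
    (hv : IsLabel n m ℓ v) (hmod : v % 2 = ℓ (n + 2, 0) % 2) (hlo : ℓ (n + 2, 0) ≤ v + 6)
    (hhi : v + 4 ≤ ℓ (n + 2, 0)) (hf : ℓ (n - 1, 0) < v + ℓ u₂) : v = ℓ (n - 2, 0) := by
  have := P.f_mod_two_ne hc
  have := P.M_eq_x_add_gap
  have := P.label_psi_odd hc P.mem₂
  rcases P.isLabel_cases hv with h | ⟨w, hw, rfl⟩ | ⟨w, hw, h4, h3, rfl⟩ | h | h | h | h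
  · have := P.label_psi_add_two_le_f hc (by omega) P.mem₂
    omega
  · have hw' := P.label_psi_odd hc hw
    have := P.lt
    have := P.label_psi_odd hc P.mem₁
    have := P.eight_le_f hc (hmod ▸ hw'.1) P.mem₂ (by omega)
    omega
  · have := P.le_f_of_mod_f hc (P.isLabel_add_psi hw h4 h3 P.mem₂) (by omega)
    omega
  · exact h
  all_goals omega

/-- The label `M - 4` has the parity of `M`, so it is `e`; the same would hold for `M - 6` unless
`M = f + 3`, and then `ℓ u₁ = 1` makes `e + ℓ u₁ = f` a label. -/
theorem false_of_gap_eq_two (P : Psi3Pair n m ℓ u₁ u₂) (hc : gap n ℓ = 2) : False := by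
  have := P.f_mod_two_ne hc
  have := P.e_mod_two hc
  have := P.f_ne_gap
  have := P.f_lt_x
  have := P.M_eq_x_add_gap
  have := P.lt
  have := P.label_psi_odd hc P.mem₁
  have := P.label_psi_odd hc P.mem₂
  have := P.one_le (P.mk_zero_mem (i := n - 1) (by have := P.sixteen_le; omega) (by omega))
  have hMf : ℓ (n + 2, 0) % 2 = 0 → ℓ u₂ + 2 ≤ ℓ (n - 1, 0) :=
    fun h => P.label_psi_add_two_le_f hc h P.mem₂
  have h4 := P.eq_e_of_isLabel_mod_two hc (v := ℓ (n + 2, 0) - 4)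
    (P.isLabel_of_mod_M hc (by omega) (by omega) (by omega)) (by omega) (by omega) (by omega)
    (by omega)
  by_cases h3 : ℓ (n + 2, 0) = ℓ (n - 1, 0) + 3
  · exact P.not_isLabel_e_add_psi P.mem₁ ⟨_, P.mk_zero_mem (i := n - 1)
      (by have := P.sixteen_le; omega) (by omega), by omega⟩
  · have h6 := P.eq_e_of_isLabel_mod_two hc (v := ℓ (n + 2, 0) - 6)
      (P.isLabel_of_mod_M hc (by omega) (by omega) (by omega)) (by omega) (by omega) (by omega)
      (by omega)
    omega

end Psi3Pair

theorem not_psi3Pair : ¬ Psi3Pair n m ℓ u₁ u₂ := fun P => by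
  have := P.gap_pos
  have := P.gap_le_two
  rcases (by omega : gap n ℓ = 1 ∨ gap n ℓ = 2) with hc | hc
  · exact P.false_of_gap_eq_one hc
  · exact P.false_of_gap_eq_two hc

theorem SecondMaxAtN.label_psi_eq (H : SecondMaxAtN n m ℓ) (hu₁ : u₁ ∈ psi m 3)
    (hu₂ : u₂ ∈ psi m 3) : ℓ u₁ = ℓ u₂ := by
  rcases lt_trichotomy (ℓ u₁) (ℓ u₂) with h | h | h
  · exact (not_psi3Pair ⟨H, hu₁, hu₂, h⟩).elim
  · exact h
  · exact (not_psi3Pair ⟨H, hu₂, hu₁, h⟩).elim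

theorem MinSumLabeling.label_psi_eq (C : MinSumLabeling n m ℓ) (hu₁ : u₁ ∈ psi m 3)
    (hu₂ : u₂ ∈ psi m 3) : ℓ u₁ = ℓ u₂ := by
  by_cases h : ∃ v, IsSecondMax n m ℓ v ∧ v.1 = n - 1
  · obtain ⟨v, hv, hv1⟩ := h
    have := C.add_label_psi_of_isSecondMax hv hv1 hu₁
    have := C.add_label_psi_of_isSecondMax hv hv1 hu₂
    omega
  · exact (C.secondMaxAtN fun v hv hv1 => h ⟨v, hv, hv1⟩).label_psi_eq hu₁ hu₂

end Gnm

/-- For `n ≥ 39`, any admissible `m`, and any minimal sum labeling `ℓ` of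
`G(n,m)`, all vertices of `ψ(3)` carry the same label. -/
theorem psi_three_label_unique (n : ℕ) (hn : 39 ≤ n) (m : ℕ → ℕ)
    (hm : Admissible n m) (ℓ : ℕ × ℕ → ℕ) (hℓ : IsSumLabelingG n m ℓ)
    (hmin : ∃ u ∈ Vnm n m, ℓ u = 1)
    (v₁ v₂ : ℕ × ℕ) (hv₁ : v₁ ∈ psi m 3) (hv₂ : v₂ ∈ psi m 3) :
    ℓ v₁ = ℓ v₂ :=
  Gnm.MinSumLabeling.label_psi_eq ⟨by omega, hm, hℓ, hmin⟩ hv₁ hv₂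
end
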